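/- Let X be a finite alphabet, ε > 0, and P₀, P₁ ∈ P_ε distinct distributions, where P_ε = {P : P(x) ≥ ε ∀x}. If e₀ ∈ (0, D(P₁‖P₀)], then inf{ D(Q‖P₁) : Q ∈ P_ε, D(Q‖P₀) ≤ e₀ } = inf{ D(Q‖P₁) : Q ∈ P(X), D(Q‖P₀) ≤ e₀ }, i.e., restricting the optimization to P_ε does not change the optimal value. -/
import Mathlib


open scoped BigOperators

/-- KL divergence (base-2 logarithms) between finitely supported distributions. -/
noncomputable def KL {X : Type*} [Fintype X] (P Q : X → ℝ) : ℝ :=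
  ∑ x, P x * Real.logb 2 (P x / Q x)

/-- `P` is a probability distribution on the finite alphabet `X`. -/
def IsProb {X : Type*} [Fintype X] (P : X → ℝ) : Prop :=
  (∀ x, 0 ≤ P x) ∧ ∑ x, P x = 1

lemma kl_self_aux {X : Type*} [Fintype X] (R : X → ℝ) (hR : ∀ x, 0 < R x) : KL R R = 0 := by
  unfold KL
  simp [div_self (ne_of_gt (hR _))]

lemma gibbs_aux {X : Type*} [Fintype X] (Q R : X → ℝ) (hQ : IsProb Q) (hR : ∀ x, 0 < R x)
    (hRs : ∑ x, R x ≤ 1) : 0 ≤ KL Q R := by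
  have hl2 : (0:ℝ) < Real.log 2 := Real.log_pos one_lt_two
  have key : ∀ x, (Q x - R x) / Real.log 2 ≤ Q x * Real.logb 2 (Q x / R x) := by
    intro x
    rcases eq_or_lt_of_le (hQ.1 x) with h | h
    · rw [← h]; simp
      exact div_nonpos_of_nonpos_of_nonneg (by linarith [hR x]) hl2.le
    · have h1 : Real.log (R x / Q x) ≤ R x / Q x - 1 :=
        Real.log_le_sub_one_of_pos (div_pos (hR x) h)
      have h2 : Real.log (Q x / R x) = - Real.log (R x / Q x) := by
        rw [← Real.log_inv]; congr 1; field_simp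
      have h3 : 1 - R x / Q x ≤ Real.log (Q x / R x) := by rw [h2]; linarith
      have h4 : Q x - R x ≤ Q x * Real.log (Q x / R x) := by
        have := mul_le_mul_of_nonneg_left h3 h.le
        have hQx : Q x * (1 - R x / Q x) = Q x - R x := by field_simp
        linarith [hQx ▸ this]
      rw [Real.logb, div_le_iff₀ hl2]
      calc Q x - R x ≤ Q x * Real.log (Q x / R x) := h4
        _ = Q x * (Real.log (Q x / R x) / Real.log 2) * Real.log 2 := by field_simp
  have hsum : (∑ x, Q x - ∑ x, R x) / Real.log 2 ≤ KL Q R := by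
    unfold KL
    have h := Finset.sum_le_sum (fun x (_ : x ∈ Finset.univ) => key x)
    rw [← Finset.sum_div, Finset.sum_sub_distrib] at h
    exact h
  have : (0:ℝ) ≤ (∑ x, Q x - ∑ x, R x) / Real.log 2 := by
    rw [hQ.2]; apply div_nonneg (by linarith) hl2.le
  linarith

lemma decomp_aux {X : Type*} [Fintype X] (P₀ P₁ : X → ℝ) (h0 : ∀ x, 0 < P₀ x)
    (h1 : ∀ x, 0 < P₁ x) (ρ : ℝ) (hρ : 0 < ρ) (Q : X → ℝ) (hQ : IsProb Q) :
    KL Q P₁ + ((1 - ρ)/ρ) * KL Q P₀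
      = (1/ρ) * KL Q (fun x => P₀ x ^ (1-ρ) * P₁ x ^ ρ / (∑ y, P₀ y ^ (1-ρ) * P₁ y ^ ρ))
        - (1/ρ) * Real.logb 2 (∑ y, P₀ y ^ (1-ρ) * P₁ y ^ ρ) := by
  have hl2 : (0:ℝ) < Real.log 2 := Real.log_pos one_lt_two
  have hN : ∀ x, 0 < P₀ x ^ (1-ρ) * P₁ x ^ ρ := fun x =>
    mul_pos (Real.rpow_pos_of_pos (h0 x) _) (Real.rpow_pos_of_pos (h1 x) _)
  set Z : ℝ := ∑ y, P₀ y ^ (1-ρ) * P₁ y ^ ρ with hZdef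
  have hne : (Finset.univ : Finset X).Nonempty := by
    by_contra hn
    rw [Finset.not_nonempty_iff_eq_empty] at hn
    have h2 := hQ.2
    rw [hn, Finset.sum_empty] at h2
    exact one_ne_zero h2.symm
  have hZ : 0 < Z := Finset.sum_pos (fun y _ => hN y) hne
  have key : ∀ x, Q x * Real.logb 2 (Q x / P₁ x)
      + ((1 - ρ)/ρ) * (Q x * Real.logb 2 (Q x / P₀ x))
      = (1/ρ) * (Q x * Real.logb 2 (Q x / (P₀ x ^ (1-ρ) * P₁ x ^ ρ / Z)))
        - (1/ρ) * Real.logb 2 Z * Q x := by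
    intro x
    rcases eq_or_lt_of_le (hQ.1 x) with h | h
    · rw [← h]; ring
    · have e1 : Real.log (Q x / P₁ x) = Real.log (Q x) - Real.log (P₁ x) :=
        Real.log_div (ne_of_gt h) (ne_of_gt (h1 x))
      have e2 : Real.log (Q x / P₀ x) = Real.log (Q x) - Real.log (P₀ x) :=
        Real.log_div (ne_of_gt h) (ne_of_gt (h0 x))
      have e3 : Real.log (Q x / (P₀ x ^ (1-ρ) * P₁ x ^ ρ / Z))
          = Real.log (Q x) - ((1-ρ) * Real.log (P₀ x) + ρ * Real.log (P₁ x) - Real.log Z) := by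
        rw [Real.log_div (ne_of_gt h) (ne_of_gt (div_pos (hN x) hZ)),
          Real.log_div (ne_of_gt (hN x)) (ne_of_gt hZ),
          Real.log_mul (ne_of_gt (Real.rpow_pos_of_pos (h0 x) _))
            (ne_of_gt (Real.rpow_pos_of_pos (h1 x) _)),
          Real.log_rpow (h0 x), Real.log_rpow (h1 x)]
      simp only [Real.logb, e1, e2, e3]
      field_simp
      ring
  unfold KL
  have hsum := Finset.sum_congr rfl (fun x (_ : x ∈ Finset.univ) => key x)
  rw [Finset.sum_add_distrib, Finset.sum_sub_distrib, ← Finset.mul_sum, ← Finset.mul_sum,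
    ← Finset.mul_sum, hQ.2] at hsum
  rw [hsum]; ring

lemma exists_good_R {X : Type*} [Fintype X] (ε : ℝ) (hε : 0 < ε)
    (P₀ P₁ : X → ℝ) (hP₀ : IsProb P₀) (hP₁ : IsProb P₁)
    (hP₀ε : ∀ x, ε ≤ P₀ x) (hP₁ε : ∀ x, ε ≤ P₁ x)
    (e₀ : ℝ) (he₀ : e₀ ∈ Set.Ioc 0 (KL P₁ P₀)) :
    ∃ R : X → ℝ, IsProb R ∧ (∀ x, ε ≤ R x) ∧ KL R P₀ ≤ e₀ ∧
      ∀ Q : X → ℝ, IsProb Q → KL Q P₀ ≤ e₀ → KL R P₁ ≤ KL Q P₁ := by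
  classical
  obtain ⟨he₀pos, he₀le⟩ := he₀
  have h0 : ∀ x, 0 < P₀ x := fun x => lt_of_lt_of_le hε (hP₀ε x)
  have h1 : ∀ x, 0 < P₁ x := fun x => lt_of_lt_of_le hε (hP₁ε x)
  set N : ℝ → X → ℝ := fun ρ x => P₀ x ^ (1-ρ) * P₁ x ^ ρ with hNdef
  set Z : ℝ → ℝ := fun ρ => ∑ y, N ρ y with hZdef
  have hNpos : ∀ ρ x, 0 < N ρ x := fun ρ x =>
    mul_pos (Real.rpow_pos_of_pos (h0 x) _) (Real.rpow_pos_of_pos (h1 x) _)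
  have hXne : (Finset.univ : Finset X).Nonempty := by
    by_contra hn
    rw [Finset.not_nonempty_iff_eq_empty] at hn
    have h2 := hP₀.2
    rw [hn, Finset.sum_empty] at h2
    exact one_ne_zero h2.symm
  have hZpos : ∀ ρ, 0 < Z ρ := fun ρ => Finset.sum_pos (fun y _ => hNpos ρ y) hXne
  set f : ℝ → ℝ := fun ρ => KL (fun x => N ρ x / Z ρ) P₀ with hfdef
  -- continuity
  have hNc : ∀ x, Continuous (fun ρ => N ρ x) := by
    intro x
    have heq : (fun ρ => N ρ x)
        = fun ρ => Real.exp (Real.log (P₀ x) * (1-ρ)) * Real.exp (Real.log (P₁ x) * ρ) := by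
      funext ρ
      simp only [hNdef]
      rw [Real.rpow_def_of_pos (h0 x), Real.rpow_def_of_pos (h1 x)]
    rw [heq]
    continuity
  have hZc : Continuous Z := by
    rw [hZdef]
    exact continuous_finset_sum _ (fun x _ => hNc x)
  have hfc : Continuous f := by
    rw [hfdef]
    unfold KL
    apply continuous_finset_sum
    intro x _
    have hc1 : Continuous (fun ρ => N ρ x / Z ρ) :=
      (hNc x).div hZc (fun ρ => ne_of_gt (hZpos ρ))
    have hc2 : Continuous (fun ρ => Real.logb 2 (N ρ x / Z ρ / P₀ x)) := by
      simp only [Real.logb]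
      exact ((hc1.div_const _).log
        (fun ρ => ne_of_gt (div_pos (div_pos (hNpos ρ x) (hZpos ρ)) (h0 x)))).div_const _
    exact hc1.mul hc2
  -- endpoint values
  have hN0 : ∀ x, N 0 x = P₀ x := by
    intro x; simp [hNdef]
  have hN1 : ∀ x, N 1 x = P₁ x := by
    intro x; simp [hNdef]
  have hZ0 : Z 0 = 1 := by
    rw [hZdef]
    simp only [hN0]
    exact hP₀.2
  have hZ1 : Z 1 = 1 := by
    rw [hZdef]
    simp only [hN1]
    exact hP₁.2
  have hf0 : f 0 = 0 := by
    have heq : (fun x => N 0 x / Z 0) = P₀ := funext fun x => by rw [hN0, hZ0, div_one]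
    rw [hfdef]
    simp only [heq]
    unfold KL
    simp [div_self (ne_of_gt (h0 _))]
  have hf1 : f 1 = KL P₁ P₀ := by
    have heq : (fun x => N 1 x / Z 1) = P₁ := funext fun x => by rw [hN1, hZ1, div_one]
    rw [hfdef]
    simp only [heq]
  -- IVT
  have hmem : e₀ ∈ Set.Icc (f 0) (f 1) := by rw [hf0, hf1]; exact ⟨he₀pos.le, he₀le⟩
  obtain ⟨ρ, hρI, hfρ⟩ := intermediate_value_Icc zero_le_one hfc.continuousOn hmem
  have hρne : ρ ≠ 0 := by
    intro hEq
    rw [hEq, hf0] at hfρ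
    exact absurd hfρ.symm (ne_of_gt he₀pos)
  have hρpos : 0 < ρ := lt_of_le_of_ne hρI.1 (Ne.symm hρne)
  set R : X → ℝ := fun x => N ρ x / Z ρ with hRdef
  have hRpos : ∀ x, 0 < R x := fun x => div_pos (hNpos ρ x) (hZpos ρ)
  have hRsum : ∑ x, R x = 1 := by
    rw [hRdef, ← Finset.sum_div]
    exact div_self (ne_of_gt (hZpos ρ))
  have hRprob : IsProb R := ⟨fun x => (hRpos x).le, hRsum⟩
  have hZle1 : Z ρ ≤ 1 := by
    calc Z ρ ≤ ∑ x, ((1-ρ) * P₀ x + ρ * P₁ x) := by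
          apply Finset.sum_le_sum
          intro x _
          exact Real.geom_mean_le_arith_mean2_weighted (by linarith [hρI.2]) hρI.1
            (h0 x).le (h1 x).le (by ring)
      _ = (1-ρ) * 1 + ρ * 1 := by
          rw [Finset.sum_add_distrib, ← Finset.mul_sum, ← Finset.mul_sum, hP₀.2, hP₁.2]
      _ = 1 := by ring
  have hRε : ∀ x, ε ≤ R x := by
    intro x
    have hNx : ε ≤ N ρ x := by
      have hε1 : ε ^ (1-ρ) ≤ P₀ x ^ (1-ρ) :=
        Real.rpow_le_rpow hε.le (hP₀ε x) (by linarith [hρI.2])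
      have hε2 : ε ^ ρ ≤ P₁ x ^ ρ := Real.rpow_le_rpow hε.le (hP₁ε x) hρI.1
      have hεe : ε ^ (1-ρ) * ε ^ ρ = ε := by
        rw [← Real.rpow_add hε]; norm_num
      calc ε = ε ^ (1-ρ) * ε ^ ρ := hεe.symm
        _ ≤ N ρ x := mul_le_mul hε1 hε2 (Real.rpow_nonneg hε.le _)
            (Real.rpow_pos_of_pos (h0 x) _).le
    rw [hRdef]
    rw [le_div_iff₀ (hZpos ρ)]
    nlinarith [hε.le]
  have hRe : KL R P₀ = e₀ := hfρ
  refine ⟨R, hRprob, hRε, le_of_eq hRe, ?_⟩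
  intro Q hQ hQe
  have hReq : R = (fun x => P₀ x ^ (1-ρ) * P₁ x ^ ρ / (∑ y, P₀ y ^ (1-ρ) * P₁ y ^ ρ)) := rfl
  have d1 := decomp_aux P₀ P₁ h0 h1 ρ hρpos Q hQ
  have d2 := decomp_aux P₀ P₁ h0 h1 ρ hρpos R hRprob
  rw [← hReq] at d1 d2
  have hRR : KL R R = 0 := kl_self_aux R hRpos
  have hQR : 0 ≤ KL Q R := gibbs_aux Q R hQ hRpos hRsum.le
  have hcnn : 0 ≤ (1-ρ)/ρ := div_nonneg (by linarith [hρI.2]) hρpos.le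
  have h1ρ : 0 ≤ 1/ρ := by positivity
  have hA : 0 ≤ (1/ρ) * KL Q R := mul_nonneg h1ρ hQR
  have hB : ((1-ρ)/ρ) * KL Q P₀ ≤ ((1-ρ)/ρ) * e₀ := mul_le_mul_of_nonneg_left hQe hcnn
  rw [hRR, hRe] at d2
  linarith [d1, d2, hA, hB]


/-- Restricting the binary-hypothesis-testing optimization to `P_ε` does not
change the optimal value, when `P₀, P₁ ∈ P_ε`. -/
theorem stmt9 {X : Type*} [Fintype X] (ε : ℝ) (hε : 0 < ε)
    (P₀ P₁ : X → ℝ) (hP₀ : IsProb P₀) (hP₁ : IsProb P₁)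
    (hP₀ε : ∀ x, ε ≤ P₀ x) (hP₁ε : ∀ x, ε ≤ P₁ x) (hne : P₀ ≠ P₁)
    (e₀ : ℝ) (he₀ : e₀ ∈ Set.Ioc 0 (KL P₁ P₀)) :
    sInf {v | ∃ Q : X → ℝ, IsProb Q ∧ (∀ x, ε ≤ Q x) ∧ KL Q P₀ ≤ e₀ ∧ v = KL Q P₁}
      = sInf {v | ∃ Q : X → ℝ, IsProb Q ∧ KL Q P₀ ≤ e₀ ∧ v = KL Q P₁} := by
  obtain ⟨R, hRprob, hRε, hRe, hmin⟩ :=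
    exists_good_R ε hε P₀ P₁ hP₀ hP₁ hP₀ε hP₁ε e₀ he₀
  have h1 : ∀ x, 0 < P₁ x := fun x => lt_of_lt_of_le hε (hP₁ε x)
  set SA := {v | ∃ Q : X → ℝ, IsProb Q ∧ (∀ x, ε ≤ Q x) ∧ KL Q P₀ ≤ e₀ ∧ v = KL Q P₁} with hSA
  set SB := {v | ∃ Q : X → ℝ, IsProb Q ∧ KL Q P₀ ≤ e₀ ∧ v = KL Q P₁} with hSB
  have hsub : SA ⊆ SB := by
    rintro v ⟨Q, hQ, _, hQe, hv⟩
    exact ⟨Q, hQ, hQe, hv⟩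
  have hRA : KL R P₁ ∈ SA := ⟨R, hRprob, hRε, hRe, rfl⟩
  have hbddB : BddBelow SB := by
    refine ⟨0, ?_⟩
    rintro v ⟨Q, hQ, _, rfl⟩
    exact gibbs_aux Q P₁ hQ h1 (le_of_eq hP₁.2)
  have hbddA : BddBelow SA := hbddB.mono hsub
  apply le_antisymm
  · apply le_csInf ⟨KL R P₁, hsub hRA⟩
    rintro v ⟨Q, hQ, hQe, rfl⟩
    calc sInf SA ≤ KL R P₁ := csInf_le hbddA hRA
      _ ≤ KL Q P₁ := hmin Q hQ hQe
  · exact csInf_le_csInf hbddB ⟨KL R P₁, hRA⟩ hsub
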